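/- arXiv:1203.4350 — 3 statements merged into one kernel-verified Lean document; each statement's English description precedes it below -/
import Mathlib

section
/- Let ω = (ω₁, ω₂, ω₃) ∈ ℝ³ with all ωᵢ nonzero, and suppose 1/ω₁, 1/ω₂, 1/ω₃ are linearly independent over ℚ. Then there do not exist real numbers x, y, z and integers a, b, c, d such that the three points (x,0,0), (a,y,b), (c,d,z) are distinct and collinear with direction vector ω. -/
/-!
Along a line with direction `ω`, the parameter difference of two points can be read off any
coordinate: it is the coordinate difference divided by `ωᵢ`. For the three points this gives
`b / ω₃`, `d / ω₂` and `(c - a) / ω₁`, and going around the triangle these add up to zero. This is an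
integer relation among the `ωᵢ⁻¹`, so `b = 0`, and then the first two points coincide.
-/

theorem eq_div_of_sub_eq_smul {ι K : Type*} [Field K] {p q ω : ι → K} {s : K}
    (h : q - p = s • ω) {i : ι} (hi : ω i ≠ 0) : s = (q i - p i) / ω i := by
  rw [eq_div_iff hi, ← Pi.sub_apply, h, Pi.smul_apply, smul_eq_mul]

theorem sub_eq_sub_smul_of_sub_eq_smul {R M : Type*} [Ring R] [AddCommGroup M] [Module R M]
    {p q r ω : M} {s t : R} (hq : q - p = s • ω) (hr : r - p = t • ω) :
    r - q = (t - s) • ω := by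
  rw [sub_smul, ← hq, ← hr, sub_sub_sub_cancel_right]

theorem no_triple_diagonal_of_B_irrational_general (ω₁ ω₂ ω₃ : ℝ)
    (hB : LinearIndependent ℚ ![ω₁⁻¹, ω₂⁻¹, ω₃⁻¹]) :
    ¬ ∃ (x y z : ℝ) (a b c d : ℤ) (s t : ℝ),
      (![x, 0, 0] : Fin 3 → ℝ) ≠ ![(a : ℝ), y, (b : ℝ)] ∧
      (![(a : ℝ), y, (b : ℝ)] : Fin 3 → ℝ) ≠ ![(c : ℝ), (d : ℝ), z] ∧
      (![x, 0, 0] : Fin 3 → ℝ) ≠ ![(c : ℝ), (d : ℝ), z] ∧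
      (![(a : ℝ), y, (b : ℝ)] - ![x, 0, 0] : Fin 3 → ℝ) = s • ![ω₁, ω₂, ω₃] ∧
      (![(c : ℝ), (d : ℝ), z] - ![x, 0, 0] : Fin 3 → ℝ) = t • ![ω₁, ω₂, ω₃] := by
  rintro ⟨x, y, z, a, b, c, d, s, t, hpq, -, -, hs, ht⟩
  have hω : ∀ i, ![ω₁, ω₂, ω₃] i ≠ 0 := fun i hi ↦
    hB.ne_zero i (by fin_cases i <;> simpa using hi)
  have hs_eq := eq_div_of_sub_eq_smul hs (hω 2)
  have ht_eq := eq_div_of_sub_eq_smul ht (hω 1)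
  have hts_eq := eq_div_of_sub_eq_smul (sub_eq_sub_smul_of_sub_eq_smul hs ht) (hω 0)
  simp only [Fin.isValue, Matrix.cons_val, Matrix.cons_val_one, Matrix.cons_val_zero, sub_zero,
    div_eq_mul_inv] at hs_eq ht_eq hts_eq
  have hcycle : ∑ i, ![c - a, -d, b] i • ![ω₁⁻¹, ω₂⁻¹, ω₃⁻¹] i = 0 := by
    simp only [Fin.sum_univ_three, Fin.isValue, Matrix.cons_val, Matrix.cons_val_one,
      Matrix.cons_val_zero, zsmul_eq_mul, Int.cast_sub, Int.cast_neg, neg_mul]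
    linear_combination ht_eq - hs_eq - hts_eq
  have hb : b = 0 := Fintype.linearIndependent_iff.mp (hB.restrict_scalars' ℤ) _ hcycle 2
  have hs0 : s = 0 := by rw [hs_eq, hb, Int.cast_zero, zero_mul]
  exact hpq (sub_eq_zero.mp (by rw [hs, hs0, zero_smul])).symm

/-- A B-irrational direction admits no line through three edge-types:
    there are no distinct collinear points (x,0,0), (a,y,b), (c,d,z)
    with a,b,c,d integers and direction vector ω. -/
theorem no_triple_diagonal_of_B_irrational (ω₁ ω₂ ω₃ : ℝ)
    (h1 : ω₁ ≠ 0) (h2 : ω₂ ≠ 0) (h3 : ω₃ ≠ 0)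
    (hB : LinearIndependent ℚ ![ω₁⁻¹, ω₂⁻¹, ω₃⁻¹]) :
    ¬ ∃ (x y z : ℝ) (a b c d : ℤ) (s t : ℝ),
      (![x, 0, 0] : Fin 3 → ℝ) ≠ ![(a : ℝ), y, (b : ℝ)] ∧
      (![(a : ℝ), y, (b : ℝ)] : Fin 3 → ℝ) ≠ ![(c : ℝ), (d : ℝ), z] ∧
      (![x, 0, 0] : Fin 3 → ℝ) ≠ ![(c : ℝ), (d : ℝ), z] ∧
      (![(a : ℝ), y, (b : ℝ)] - ![x, 0, 0] : Fin 3 → ℝ) = s • ![ω₁, ω₂, ω₃] ∧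
      (![(c : ℝ), (d : ℝ), z] - ![x, 0, 0] : Fin 3 → ℝ) = t • ![ω₁, ω₂, ω₃] :=
  no_triple_diagonal_of_B_irrational_general ω₁ ω₂ ω₃ hB
end

section
/- The three points P₁ = (π/6, 0, 0), P₂ = (1, 1, (6-π)/(12-π)), P₃ = (2, (12-π)/(6-π), 1) in ℝ³ are collinear, with common direction vector ω = (1 - π/6, 1, (6-π)/(12-π)). -/
/-!
With a real `a` in place of `π`, one has `P₂ - P₁ = ω` on the nose and
`P₃ - P₂ = (6 / (6 - a)) • ω`, a positive multiple as soon as `a < 6`.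
-/

open Real

noncomputable def direction (a : ℝ) : Fin 3 → ℝ := ![1 - a / 6, 1, (6 - a) / (12 - a)]

theorem sub_eq_direction (a : ℝ) :
    (![(1 : ℝ), 1, (6 - a) / (12 - a)] - ![a / 6, 0, 0] : Fin 3 → ℝ) = direction a := by
  ext i
  fin_cases i <;> simp [direction]

theorem sub_eq_smul_direction {a : ℝ} (h6 : a ≠ 6) (h12 : a ≠ 12) :
    (![(2 : ℝ), (12 - a) / (6 - a), 1] - ![(1 : ℝ), 1, (6 - a) / (12 - a)] : Fin 3 → ℝ)
      = (6 / (6 - a)) • direction a := by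
  have h6' : 6 - a ≠ 0 := sub_ne_zero.mpr (Ne.symm h6)
  have h12' : 12 - a ≠ 0 := sub_ne_zero.mpr (Ne.symm h12)
  ext i
  fin_cases i <;>
    simp only [direction, Fin.isValue, Fin.zero_eta, Fin.mk_one, Fin.reduceFinMk, Pi.sub_apply,
      Pi.smul_apply, smul_eq_mul, Matrix.cons_val_zero, Matrix.cons_val_one, Matrix.cons_val] <;>
    field_simp <;> ring

theorem exists_pos_smul_direction {a : ℝ} (ha : a < 6) :
    ∃ s t : ℝ, 0 < s ∧ 0 < t ∧
      (![(1 : ℝ), 1, (6 - a) / (12 - a)] - ![a / 6, 0, 0] : Fin 3 → ℝ) = s • direction a ∧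
      (![(2 : ℝ), (12 - a) / (6 - a), 1] - ![(1 : ℝ), 1, (6 - a) / (12 - a)] : Fin 3 → ℝ)
        = t • direction a :=
  ⟨1, 6 / (6 - a), one_pos, div_pos (by norm_num) (sub_pos.mpr ha),
    by rw [one_smul, sub_eq_direction],
    sub_eq_smul_direction ha.ne (by linarith)⟩

/-- The points (π/6,0,0), (1,1,(6-π)/(12-π)), (2,(12-π)/(6-π),1) are collinear
    with direction ω = (1-π/6, 1, (6-π)/(12-π)). -/
theorem explicit_collinear_triple :
    ∃ s t : ℝ, 0 < s ∧ 0 < t ∧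
      (![(1 : ℝ), 1, (6 - π) / (12 - π)] - ![π / 6, 0, 0] : Fin 3 → ℝ)
        = s • ![1 - π / 6, 1, (6 - π) / (12 - π)] ∧
      (![(2 : ℝ), (12 - π) / (6 - π), 1] - ![(1 : ℝ), 1, (6 - π) / (12 - π)] : Fin 3 → ℝ)
        = t • ![1 - π / 6, 1, (6 - π) / (12 - π)] :=
  exists_pos_smul_direction (by linarith [pi_le_four])
end

section
/- Cassaigne's bispecial identity: for a factorial extendable language L over a finite alphabet with complexity p(n) and s(n) = p(n+1) - p(n), one has s(n+1) - s(n) = Σ_{v bispecial of length n} (m_b(v) - m_r(v) - m_l(v) + 1), where m_r(v), m_l(v), m_b(v) count right, left, and two-sided extensions of v in L. -/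
/-!
Counting the words of `L` of length `n + 1` by their last letter and by their first letter, and
those of length `n + 2` by both end letters, gives `p (n + 1) = ∑ m_r v = ∑ m_l v` and
`p (n + 2) = ∑ m_b v`, the sums running over the words `v ∈ L` of length `n`. Hence
`s (n + 1) - s n = ∑ (m_b v - m_r v - m_l v + 1)`. If `v` is not bispecial, say `m_r v = 1`, then
each left extension `b v` has exactly one right extension (at least one by extendability, at most
`m_r v` by factoriality), so `m_b v = m_l v` and the term of `v` vanishes.
-/

/-- Number of right extensions of `v` in the language `L`. -/
noncomputable def mR {A : Type*} (L : Set (List A)) (v : List A) : ℕ :=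
  Nat.card {a : A | v ++ [a] ∈ L}

/-- Number of left extensions of `v` in the language `L`. -/
noncomputable def mL {A : Type*} (L : Set (List A)) (v : List A) : ℕ :=
  Nat.card {b : A | b :: v ∈ L}

/-- Number of two-sided extensions of `v` in the language `L`. -/
noncomputable def mB {A : Type*} (L : Set (List A)) (v : List A) : ℕ :=
  Nat.card {p : A × A | p.2 :: (v ++ [p.1]) ∈ L}

/-- Complexity function of the language `L`. -/
noncomputable def complexityFn {A : Type*} (L : Set (List A)) (n : ℕ) : ℕ :=
  Nat.card {w : List A | w ∈ L ∧ w.length = n}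

open Finset

def IsFactorial {A : Type*} (L : Set (List A)) : Prop :=
  ∀ u w : List A, u <:+: w → w ∈ L → u ∈ L

namespace FactorComplexity

open scoped Classical

variable {A : Type*} [Fintype A] {L : Set (List A)}

noncomputable def rightExts (L : Set (List A)) (v : List A) : Finset A :=
  univ.filter fun a => v ++ [a] ∈ L

noncomputable def leftExts (L : Set (List A)) (v : List A) : Finset A :=
  univ.filter fun b => b :: v ∈ L

noncomputable def words (L : Set (List A)) (n : ℕ) : Finset (List A) :=
  ((List.finite_length_eq A n).subset fun _ hw => hw.2 :
    {w : List A | w ∈ L ∧ w.length = n}.Finite).toFinset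

@[simp] lemma mem_rightExts {v : List A} {a : A} : a ∈ rightExts L v ↔ v ++ [a] ∈ L := by
  simp [rightExts]

@[simp] lemma mem_leftExts {v : List A} {b : A} : b ∈ leftExts L v ↔ b :: v ∈ L := by
  simp [leftExts]

@[simp] lemma mem_words {n : ℕ} {w : List A} : w ∈ words L n ↔ w ∈ L ∧ w.length = n := by
  simp [words]

lemma mR_eq_card_rightExts (v : List A) : mR L v = #(rightExts L v) := by
  rw [mR, Nat.card_eq_card_toFinset, Set.toFinset_ofPred, rightExts]

lemma mL_eq_card_leftExts (v : List A) : mL L v = #(leftExts L v) := by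
  rw [mL, Nat.card_eq_card_toFinset, Set.toFinset_ofPred, leftExts]

lemma complexityFn_eq_card_words (n : ℕ) : complexityFn L n = #(words L n) := by
  rw [complexityFn, Nat.card_eq_card_finite_toFinset]
  rfl

lemma mB_eq_sum_mR (v : List A) : mB L v = ∑ b, mR L (b :: v) := by
  rw [mB, Nat.card_eq_card_toFinset, Set.toFinset_ofPred, card_filter,
    Fintype.sum_prod_type_right]
  refine sum_congr rfl fun b _ => ?_
  rw [mR_eq_card_rightExts, rightExts, card_filter]
  rfl

lemma mB_eq_sum_mL (v : List A) : mB L v = ∑ a, mL L (v ++ [a]) := by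
  rw [mB, Nat.card_eq_card_toFinset, Set.toFinset_ofPred, card_filter,
    Fintype.sum_prod_type]
  refine sum_congr rfl fun a _ => ?_
  rw [mL_eq_card_leftExts, leftExts, card_filter]

lemma sum_words_succ_eq_sum_leftExts {M : Type*} [AddCommMonoid M] (hL : IsFactorial L)
    (f : List A → M) (n : ℕ) :
    ∑ w ∈ words L (n + 1), f w = ∑ v ∈ words L n, ∑ b ∈ leftExts L v, f (b :: v) := by
  rw [sum_sigma']
  symm
  refine sum_bij (fun x _ => x.2 :: x.1) ?_ ?_ ?_ fun _ _ => rfl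
  · rintro ⟨v, b⟩ hvb
    simp only [mem_sigma, mem_words, mem_leftExts] at hvb
    simp [hvb.2, hvb.1.2]
  · rintro ⟨v, b⟩ - ⟨v', b'⟩ - h
    obtain ⟨rfl, rfl⟩ := List.cons.inj h
    rfl
  · rintro (_ | ⟨b, v⟩) hw
    · simp at hw
    · simp only [mem_words, List.length_cons, Nat.add_right_cancel_iff] at hw
      have hv : v ∈ L := hL _ _ (List.suffix_cons b v).isInfix hw.1
      exact ⟨⟨v, b⟩, by simpa [hw.2] using ⟨hv, hw.1⟩, rfl⟩

lemma sum_words_succ_eq_sum_rightExts {M : Type*} [AddCommMonoid M] (hL : IsFactorial L)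
    (f : List A → M) (n : ℕ) :
    ∑ w ∈ words L (n + 1), f w = ∑ v ∈ words L n, ∑ a ∈ rightExts L v, f (v ++ [a]) := by
  rw [sum_sigma']
  symm
  refine sum_bij (fun x _ => x.1 ++ [x.2]) ?_ ?_ ?_ fun _ _ => rfl
  · rintro ⟨v, a⟩ hva
    simp only [mem_sigma, mem_words, mem_rightExts] at hva
    simp [hva.2, hva.1.2]
  · rintro ⟨v, a⟩ - ⟨v', a'⟩ - h
    obtain ⟨rfl, h⟩ := List.append_inj' h rfl
    obtain rfl := List.singleton_inj.1 h
    rfl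
  · intro w hw
    obtain rfl | ⟨v, a, rfl⟩ := w.eq_nil_or_concat'
    · simp at hw
    · simp only [mem_words, List.length_append, List.length_singleton,
        Nat.add_right_cancel_iff] at hw
      have hv : v ∈ L := hL _ _ (List.prefix_append v [a]).isInfix hw.1
      exact ⟨⟨v, a⟩, by simpa [hw.2] using ⟨hv, hw.1⟩, rfl⟩

lemma mR_eq_zero_of_notMem (hL : IsFactorial L) {w : List A} (hw : w ∉ L) : mR L w = 0 := by
  rw [mR_eq_card_rightExts, card_eq_zero, eq_empty_iff_forall_notMem]
  exact fun a ha => hw (hL _ _ (List.prefix_append w [a]).isInfix (mem_rightExts.1 ha))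

lemma mL_eq_zero_of_notMem (hL : IsFactorial L) {w : List A} (hw : w ∉ L) : mL L w = 0 := by
  rw [mL_eq_card_leftExts, card_eq_zero, eq_empty_iff_forall_notMem]
  exact fun b hb => hw (hL _ _ (List.suffix_cons b w).isInfix (mem_leftExts.1 hb))

lemma mR_pos {w : List A} (hw : ∃ a, w ++ [a] ∈ L) : 0 < mR L w := by
  obtain ⟨a, ha⟩ := hw
  exact mR_eq_card_rightExts w ▸ card_pos.2 ⟨a, mem_rightExts.2 ha⟩

lemma mL_pos {w : List A} (hw : ∃ b, b :: w ∈ L) : 0 < mL L w := by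
  obtain ⟨b, hb⟩ := hw
  exact mL_eq_card_leftExts w ▸ card_pos.2 ⟨b, mem_leftExts.2 hb⟩

lemma mR_cons_le (hL : IsFactorial L) (b : A) (v : List A) : mR L (b :: v) ≤ mR L v := by
  rw [mR_eq_card_rightExts, mR_eq_card_rightExts]
  refine card_le_card fun a ha => mem_rightExts.2 ?_
  exact hL _ _ (List.suffix_cons b (v ++ [a])).isInfix (mem_rightExts.1 ha)

lemma mL_concat_le (hL : IsFactorial L) (v : List A) (a : A) : mL L (v ++ [a]) ≤ mL L v := by
  rw [mL_eq_card_leftExts, mL_eq_card_leftExts]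
  refine card_le_card fun b hb => mem_leftExts.2 ?_
  exact hL _ _ (List.prefix_append (b :: v) [a]).isInfix (mem_leftExts.1 hb)

lemma mB_eq_mL_of_mR_eq_one (hL : IsFactorial L) (hext : ∀ w ∈ L, ∃ a, w ++ [a] ∈ L)
    {v : List A} (hv : mR L v = 1) : mB L v = mL L v := by
  rw [mB_eq_sum_mR, mL_eq_card_leftExts, leftExts, card_filter]
  refine sum_congr rfl fun b _ => ?_
  split_ifs with hb
  · exact le_antisymm (hv ▸ mR_cons_le hL b v) (mR_pos (hext _ hb))
  · exact mR_eq_zero_of_notMem hL hb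

lemma mB_eq_mR_of_mL_eq_one (hL : IsFactorial L) (hext : ∀ w ∈ L, ∃ b, b :: w ∈ L)
    {v : List A} (hv : mL L v = 1) : mB L v = mR L v := by
  rw [mB_eq_sum_mL, mR_eq_card_rightExts, rightExts, card_filter]
  refine sum_congr rfl fun a _ => ?_
  split_ifs with ha
  · exact le_antisymm (hv ▸ mL_concat_le hL v a) (mL_pos (hext _ ha))
  · exact mL_eq_zero_of_notMem hL ha

lemma card_words_succ_eq_sum_mR (hL : IsFactorial L) (n : ℕ) :
    #(words L (n + 1)) = ∑ v ∈ words L n, mR L v := by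
  rw [card_eq_sum_ones, sum_words_succ_eq_sum_rightExts hL]
  simp only [mR_eq_card_rightExts, card_eq_sum_ones]

lemma card_words_succ_eq_sum_mL (hL : IsFactorial L) (n : ℕ) :
    #(words L (n + 1)) = ∑ v ∈ words L n, mL L v := by
  rw [card_eq_sum_ones, sum_words_succ_eq_sum_leftExts hL]
  simp only [mL_eq_card_leftExts, card_eq_sum_ones]

lemma card_words_add_two_eq_sum_mB (hL : IsFactorial L) (n : ℕ) :
    #(words L (n + 2)) = ∑ v ∈ words L n, mB L v := by
  have hmB (v : List A) : mB L v = ∑ b ∈ leftExts L v, mR L (b :: v) := by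
    rw [mB_eq_sum_mR, leftExts, sum_filter_of_ne]
    exact fun b _ hb => by_contra fun h => hb (mR_eq_zero_of_notMem hL h)
  rw [card_words_succ_eq_sum_mR hL, sum_words_succ_eq_sum_leftExts hL]
  simp only [hmB]

lemma mB_sub_mR_sub_mL_add_one_eq_zero (hL : IsFactorial L)
    (hext : ∀ w ∈ L, (∃ a, w ++ [a] ∈ L) ∧ (∃ b, b :: w ∈ L)) {v : List A} (hv : v ∈ L)
    (hbi : ¬(2 ≤ mR L v ∧ 2 ≤ mL L v)) :
    (mB L v : ℤ) - mR L v - mL L v + 1 = 0 := by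
  have hmR := mR_pos (hext v hv).1
  have hmL := mL_pos (hext v hv).2
  obtain h | h : mR L v = 1 ∨ mL L v = 1 := by omega
  · rw [mB_eq_mL_of_mR_eq_one hL (fun w hw => (hext w hw).1) h, h]
    ring
  · rw [mB_eq_mR_of_mL_eq_one hL (fun w hw => (hext w hw).2) h, h]
    ring

end FactorComplexity

open FactorComplexity

/-- Cassaigne's bispecial identity: the second difference of the complexity of a
    factorial extendable language equals the sum over bispecial words `v` of
    length `n` of `m_b(v) - m_r(v) - m_l(v) + 1`. -/
theorem cassaigne_bispecial_identity {A : Type*} [Fintype A] (L : Set (List A))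
    (hfac : ∀ u w : List A, u <:+: w → w ∈ L → u ∈ L)
    (hext : ∀ w ∈ L, (∃ a : A, w ++ [a] ∈ L) ∧ (∃ b : A, b :: w ∈ L))
    (n : ℕ) :
    ((complexityFn L (n + 2) : ℤ) - complexityFn L (n + 1)) -
        ((complexityFn L (n + 1) : ℤ) - complexityFn L n)
      = ∑ᶠ v ∈ {v : List A | v ∈ L ∧ v.length = n ∧ 2 ≤ mR L v ∧ 2 ≤ mL L v},
          ((mB L v : ℤ) - mR L v - mL L v + 1) := by
  classical
  have hbispecial : {v : List A | v ∈ L ∧ v.length = n ∧ 2 ≤ mR L v ∧ 2 ≤ mL L v}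
      = ↑((words L n).filter fun v => 2 ≤ mR L v ∧ 2 ≤ mL L v) := by
    ext v
    simp [and_assoc]
  rw [hbispecial, finsum_mem_coe_finset, sum_filter_of_ne fun v hv hne => by_contra fun hbi =>
    hne (mB_sub_mR_sub_mL_add_one_eq_zero hfac hext (mem_words.1 hv).1 hbi)]
  have hB := card_words_add_two_eq_sum_mB hfac n
  have hR := card_words_succ_eq_sum_mR hfac n
  have hL := card_words_succ_eq_sum_mL hfac n
  zify at hB hR hL
  simp only [complexityFn_eq_card_words, sum_add_distrib, sum_sub_distrib, sum_const, nsmul_one]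
  linarith
end
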